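/- Let 𝔠 be a filtered Floer-Novikov complex over a Noetherian ring R. Then there exists M ∈ ℝ such that for any boundary c ∈ C_*(𝔠) (i.e., [c] = 0) there is h ∈ C_*(𝔠) with ∂h = c and ℓ(h) ≤ ℓ(c) + M. -/

import Mathlib

noncomputable section

open Filter

variable {R : Type*} [CommRing R] {Γ : Type*} [CommGroup Γ] {P : Type*} [MulAction Γ P]

/-- The chain condition for the downward-completed Floer complex: for every `C`
only finitely many points with nonzero coefficient have action greater than `C`. -/
def IsFloerChain (act : P → ℝ) (c : P → R) : Prop :=
  ∀ C : ℝ, {p : P | c p ≠ 0 ∧ C < act p}.Finite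

/-- The boundary operator determined by the incidence numbers `bnd`:
`(∂c)(q) = Σ_p c(p) · n(p,q)` (a finite sum on Floer chains). -/
def floerBdry (bnd : P → P → R) (c : P → R) : P → R :=
  fun q => ∑ᶠ p : P, c p * bnd p q

/-- The filtration level `ℓ(c) = max {𝒜(p) : c_p ≠ 0}` (with `ℓ(0) = -∞`). -/
def floerLevel (act : P → ℝ) (c : P → R) : EReal :=
  ⨆ p ∈ {p : P | c p ≠ 0}, (act p : EReal)

/-- A filtered Floer–Novikov complex over `R`: a principal `Γ`-bundle `P → S`
with `S` finite (encoded as a free `Γ`-action on `P` with finitely many orbits),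
an action functional and period homomorphism satisfying
`𝒜(g·p) = 𝒜(p) − ω(g)`, and incidence numbers `n(p,q)` which strictly decrease
the action, are `Γ`-invariant, and define a boundary operator on the completed
complex squaring to zero. -/
structure FloerComplex (R : Type*) [CommRing R] (Γ : Type*) [CommGroup Γ]
    (P : Type*) [MulAction Γ P] where
  /-- the `Γ`-action on the total space `P` is free -/
  free : ∀ (g : Γ) (p : P), g • p = p → g = 1
  /-- the base `S = P/Γ` is a finite set -/
  finiteOrbits : Finite (MulAction.orbitRel.Quotient Γ P)
  /-- the action functional `𝒜 : P → ℝ` -/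
  act : P → ℝ
  /-- the period homomorphism `ω : Γ → ℝ` -/
  per : Γ → ℝ
  per_hom : ∀ g h : Γ, per (g * h) = per g + per h
  act_smul : ∀ (g : Γ) (p : P), act (g • p) = act p - per g
  /-- the incidence numbers `n : P × P → R` -/
  bnd : P → P → R
  bnd_vanish : ∀ p q : P, bnd p q ≠ 0 → act q < act p
  bnd_equivariant : ∀ (g : Γ) (p q : P), bnd (g • p) (g • q) = bnd p q
  bnd_chain : ∀ p : P, ∀ C : ℝ, {q : P | bnd p q ≠ 0 ∧ C < act q}.Finite
  bdry_isChain : ∀ c : P → R, IsFloerChain act c → IsFloerChain act (floerBdry bnd c)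
  bdry_bdry : ∀ c : P → R, IsFloerChain act c → floerBdry bnd (floerBdry bnd c) = 0

/-- The set of filtration levels of the representatives of the homology class
of the cycle `c₀`; its infimum is the spectral number `ρ([c₀])`. -/
def repLevels (𝔠 : FloerComplex R Γ P) (c₀ : P → R) : Set EReal :=
  {x : EReal | ∃ c : P → R, IsFloerChain 𝔠.act c ∧ floerBdry 𝔠.bnd c = 0 ∧
    (∃ h : P → R, IsFloerChain 𝔠.act h ∧ floerBdry 𝔠.bnd h = c - c₀) ∧
    x = floerLevel 𝔠.act c}


/-!
Since `Γ` is finitely generated and `R` is Noetherian, the group ring `R[Γ]` is Noetherian, and so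
is `R[Γ]^(P/Γ)`. Encoding the leading term of a chain (its part at the top action level) as an
element of this module, the leading terms of all boundaries lie in the span of the leading terms
of finitely many boundaries `∂Yⱼ`. Subtracting a homogeneous `R[Γ]`-combination of the `∂Yⱼ`
from a boundary `c` kills its leading term, and the same combination of the `Yⱼ` has level at
most `ℓ(c) + M` with `M = maxⱼ (ℓ(Yⱼ) - ℓ(∂Yⱼ))`. Iterating produces boundaries of strictly
decreasing level. Their actions all lie in `𝒜(supp c)` minus the additive monoid generated by the
positive gaps `ℓ(∂Yⱼ) - 𝒜(q)`, which meets every half-line `(-∞, B]` in a finite set; hence the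
levels tend to `-∞` and the primitives add up to a chain `h` with `∂h = c` and `ℓ(h) ≤ ℓ(c) + M`.
-/

open Function Set
open scoped Pointwise

theorem exists_pos_le_of_finite_inter_Iic {D : Set ℝ} (hpos : D ⊆ Ioi 0)
    (hfin : (D ∩ Iic 1).Finite) : ∃ δ > 0, ∀ d ∈ D, δ ≤ d := by
  obtain ⟨δ, hδ, hmin⟩ :=
    exists_min_image _ id (hfin.union (finite_singleton 1)) ⟨1, Or.inr rfl⟩
  have hδ1 : δ ≤ 1 := hmin 1 (Or.inr rfl)
  refine ⟨δ, ?_, fun d hd => ?_⟩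
  · rcases hδ with hδ | rfl
    exacts [hpos hδ.1, one_pos]
  · by_cases hd1 : d ≤ 1
    · exact hmin d (Or.inl ⟨hd, hd1⟩)
    · linarith

namespace AddSubmonoid

theorem eq_zero_or_exists_add_of_mem_closure {M : Type*} [AddMonoid M] {D : Set M} {x : M}
    (hx : x ∈ closure D) : x = 0 ∨ ∃ d ∈ D, ∃ y ∈ closure D, x = d + y := by
  induction hx using closure_induction with
  | mem d hd => exact Or.inr ⟨d, hd, 0, zero_mem _, (add_zero d).symm⟩
  | zero => exact Or.inl rfl
  | add x y _ hy ihx ihy =>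
    rcases ihx with rfl | ⟨d, hd, z, hz, rfl⟩
    · simpa using ihy
    · exact Or.inr ⟨d, hd, z + y, add_mem hz hy, add_assoc d z y⟩

theorem nonneg_of_mem_closure {D : Set ℝ} (hpos : D ⊆ Ioi 0) {x : ℝ} (hx : x ∈ closure D) :
    0 ≤ x :=
  closure_le.2 (fun _ hd => mem_nonneg.2 (hpos hd).le) hx

theorem finite_closure_inter_Iic {D : Set ℝ} (hpos : D ⊆ Ioi 0)
    (hfin : ∀ B, (D ∩ Iic B).Finite) (B : ℝ) : ((closure D : Set ℝ) ∩ Iic B).Finite := by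
  obtain ⟨δ, hδ, hδD⟩ := _root_.exists_pos_le_of_finite_inter_Iic hpos (hfin 1)
  -- an element `d + y ≤ (n + 1) δ` of the closure has `d ∈ D ∩ Iic ((n + 1) δ)` and `y ≤ n δ`
  have hmul : ∀ n : ℕ, ((closure D : Set ℝ) ∩ Iic (n * δ)).Finite := by
    intro n
    induction n with
    | zero =>
      refine (finite_singleton 0).subset fun x ⟨hx, hxB⟩ => ?_
      exact le_antisymm (by simpa using hxB) (nonneg_of_mem_closure hpos hx)
    | succ n ih =>
      refine ((finite_singleton 0).union ((hfin ((n + 1) * δ)).add ih)).subset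
        fun x ⟨hx, hxB⟩ => ?_
      rcases eq_zero_or_exists_add_of_mem_closure hx with rfl | ⟨d, hd, y, hy, rfl⟩
      · exact Or.inl rfl
      · have hy0 := nonneg_of_mem_closure hpos hy
        have hdδ := hδD d hd
        simp only [mem_Iic, Nat.cast_succ] at hxB
        exact Or.inr ⟨d, ⟨hd, show d ≤ _ by linarith⟩, y, ⟨hy, show y ≤ _ by linarith⟩, rfl⟩
  obtain ⟨n, hn⟩ := exists_nat_ge (B / δ)
  exact (hmul n).subset fun x ⟨hx, hxB⟩ => ⟨hx, hxB.trans ((div_le_iff₀ hδ).1 hn)⟩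

end AddSubmonoid

namespace IsFloerChain

variable {act : P → ℝ} {x y c : P → R}

theorem zero : IsFloerChain act (0 : P → R) := fun C => by simp

theorem add (hx : IsFloerChain act x) (hy : IsFloerChain act y) : IsFloerChain act (x + y) :=
  fun C => ((hx C).union (hy C)).subset fun p ⟨hp, hC⟩ => by
    by_cases hxp : x p = 0
    · exact Or.inr ⟨by simpa [hxp] using hp, hC⟩
    · exact Or.inl ⟨hxp, hC⟩

theorem neg (hx : IsFloerChain act x) : IsFloerChain act (-x) := fun C => by simpa using hx C

theorem sub (hx : IsFloerChain act x) (hy : IsFloerChain act y) : IsFloerChain act (x - y) :=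
  sub_eq_add_neg x y ▸ hx.add hy.neg

theorem smul (r : R) (hx : IsFloerChain act x) : IsFloerChain act (r • x) :=
  fun C => (hx C).subset fun _ ⟨hp, hC⟩ => ⟨right_ne_zero_of_mul hp, hC⟩

theorem sum {ι : Type*} {s : Finset ι} {f : ι → P → R} (h : ∀ i ∈ s, IsFloerChain act (f i)) :
    IsFloerChain act (∑ i ∈ s, f i) :=
  Finset.sum_induction f (IsFloerChain act) (fun _ _ => add) zero h

end IsFloerChain

/-- The real-valued level `ℓ(c)`; for `c = 0` it is the junk value `sSup ∅ = 0` rather than `-∞`. -/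
def topLevel (act : P → ℝ) (c : P → R) : ℝ := sSup (act '' support c)

namespace IsFloerChain

variable {act : P → ℝ} {c : P → R}

theorem isGreatest_topLevel (hc : IsFloerChain act c) (h0 : c ≠ 0) :
    IsGreatest (act '' support c) (topLevel act c) := by
  obtain ⟨p₀, hp₀⟩ := Function.ne_iff.1 h0
  obtain ⟨p, ⟨hp, -⟩, hmax⟩ :=
    exists_max_image _ act (hc (act p₀ - 1)) ⟨p₀, hp₀, by linarith⟩
  have hgreatest : IsGreatest (act '' support c) (act p) := by
    refine ⟨⟨p, hp, rfl⟩, ?_⟩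
    rintro _ ⟨q, hq, rfl⟩
    by_cases hq₀ : act p₀ - 1 < act q
    · exact hmax q ⟨hq, hq₀⟩
    · linarith [hmax p₀ ⟨hp₀, by linarith⟩]
  rwa [topLevel, hgreatest.csSup_eq]

theorem le_topLevel (hc : IsFloerChain act c) {p : P} (hp : c p ≠ 0) :
    act p ≤ topLevel act c :=
  (hc.isGreatest_topLevel fun h => hp (congrFun h p)).2 ⟨p, hp, rfl⟩

theorem exists_act_eq_topLevel (hc : IsFloerChain act c) (h0 : c ≠ 0) :
    ∃ p, c p ≠ 0 ∧ act p = topLevel act c :=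
  (hc.isGreatest_topLevel h0).1

theorem finite_sub_mem_inter_Ici (hc : IsFloerChain act c) {S : Set ℝ} (hS0 : ∀ s ∈ S, 0 ≤ s)
    (hS : ∀ B, (S ∩ Iic B).Finite) (B : ℝ) :
    ({a | ∃ p, c p ≠ 0 ∧ act p - a ∈ S} ∩ Ici B).Finite := by
  refine ((((hc (B - 1)).image act).prod (hS (topLevel act c - B))).image
    fun x => x.1 - x.2).subset fun a ⟨⟨p, hp, hpa⟩, hBa⟩ => ?_
  have := hS0 _ hpa
  have := hc.le_topLevel hp
  simp only [mem_Ici] at hBa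
  exact ⟨(act p, act p - a), ⟨⟨p, ⟨hp, by linarith⟩, rfl⟩, hpa, by simp only [mem_Iic]; linarith⟩,
    by simp⟩

end IsFloerChain

def SupportRel (act : P → ℝ) (r : ℝ → ℝ → Prop) (x y : P → R) : Prop :=
  ∀ p, x p ≠ 0 → ∃ p', y p' ≠ 0 ∧ r (act p) (act p')

namespace SupportRel

variable {act : P → ℝ} {r r' r'' : ℝ → ℝ → Prop} {x y z : P → R}

theorem mono (h : SupportRel act r x y) (hr : ∀ a b, r a b → r' a b) : SupportRel act r' x y :=
  fun p hp => (h p hp).imp fun _ ⟨hp', hrel⟩ => ⟨hp', hr _ _ hrel⟩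

theorem trans (hxy : SupportRel act r x y) (hyz : SupportRel act r' y z)
    (hr : ∀ a b c, r a b → r' b c → r'' a c) : SupportRel act r'' x z := fun p hp =>
  let ⟨p', hp', hpp'⟩ := hxy p hp
  let ⟨p'', hp'', hp'p''⟩ := hyz p' hp'
  ⟨p'', hp'', hr _ _ _ hpp' hp'p''⟩

theorem of_succ {c : ℕ → P → R} (hrefl : ∀ a, r a a) (htrans : ∀ a b c, r a b → r b c → r a c)
    (h : ∀ k, SupportRel act r (c (k + 1)) (c k)) : ∀ k, SupportRel act r (c k) (c 0)
  | 0 => fun p hp => ⟨p, hp, hrefl _⟩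
  | k + 1 => (h k).trans (of_succ hrefl htrans h k) htrans

theorem finsum {t : ℕ → P → R} (h : ∀ k, SupportRel act r (t k) y) :
    SupportRel act r (fun p => ∑ᶠ k, t k p) y := by
  intro p hp
  by_contra! hno
  refine hp (finsum_eq_zero_of_forall_eq_zero fun k => ?_)
  by_contra hk
  obtain ⟨p', hp', hr⟩ := h k p hk
  exact hno p' hp' hr

end SupportRel

theorem floerLevel_le_add {act : P → ℝ} {x y : P → R} {M : ℝ}
    (h : SupportRel act (fun a b => a ≤ b + M) x y) :
    floerLevel act x ≤ floerLevel act y + M := by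
  refine iSup₂_le fun p hp => ?_
  obtain ⟨p', hp', hle⟩ := h p hp
  calc (act p : EReal) ≤ (act p' : EReal) + M := by exact_mod_cast hle
    _ ≤ floerLevel act y + M := by gcongr; exact le_iSup₂_of_le p' hp' le_rfl

/-- `t k → 0` in the filtration topology of the downward-completed complex. -/
def EventuallyVanishesAbove (act : P → ℝ) (t : ℕ → P → R) : Prop :=
  ∀ C, ∀ᶠ k in atTop, ∀ p, C < act p → t k p = 0

namespace EventuallyVanishesAbove

variable {act : P → ℝ} {c t : ℕ → P → R}

theorem of_supportRel_lt {V : Set ℝ} (hV : ∀ B, (V ∩ Ici B).Finite)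
    (hcV : ∀ k p, c k p ≠ 0 → act p ∈ V) (hlt : ∀ k, SupportRel act (· < ·) (c (k + 1)) (c k)) :
    EventuallyVanishesAbove act c := by
  classical
  intro C
  set F := (hV C).toFinset
  have hmem : ∀ k p, c k p ≠ 0 → C ≤ act p → act p ∈ F := fun k p hp hC =>
    (hV C).mem_toFinset.2 ⟨hcV k p hp, hC⟩
  -- `c k p ≠ 0` forces a strictly increasing chain of `k + 1` values of `F` starting at `act p`
  have hcard : ∀ k p, c k p ≠ 0 → C ≤ act p → k < (F.filter (act p ≤ ·)).card := by
    intro k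
    induction k with
    | zero =>
      exact fun p hp hC =>
        Finset.card_pos.2 ⟨act p, Finset.mem_filter.2 ⟨hmem 0 p hp hC, le_rfl⟩⟩
    | succ k ih =>
      intro p hp hC
      obtain ⟨p', hp', hpp'⟩ := hlt k p hp
      have hsub : F.filter (act p' ≤ ·) ⊂ F.filter (act p ≤ ·) :=
        (Finset.ssubset_iff_of_subset
          (Finset.monotone_filter_right _ fun _ _ h => hpp'.le.trans h)).2
          ⟨act p, Finset.mem_filter.2 ⟨hmem _ p hp hC, le_rfl⟩,
            fun h => (Finset.mem_filter.1 h).2.not_gt hpp'⟩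
      have := ih p' hp' (hC.trans hpp'.le)
      have := Finset.card_lt_card hsub
      omega
  refine eventually_atTop.2 ⟨F.card, fun k hk p hp => ?_⟩
  by_contra h
  have := (hcard k p h hp.le).trans_le (Finset.card_filter_le _ _)
  omega

theorem of_supportRel_add {M : ℝ} (hc : EventuallyVanishesAbove act c)
    (ht : ∀ k, SupportRel act (fun a b => a ≤ b + M) (t k) (c k)) :
    EventuallyVanishesAbove act t := fun C =>
  (hc (C - M)).mono fun k hk p hp => by
    by_contra h
    obtain ⟨p', hp', hle⟩ := ht k p h
    exact hp' (hk p' (by linarith))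

theorem exists_finsum_eq_sum_range (ht : EventuallyVanishesAbove act t) (C : ℝ) :
    ∃ K, ∀ p, C < act p →
      (∀ k, K ≤ k → t k p = 0) ∧ ∑ᶠ k, t k p = ∑ k ∈ Finset.range K, t k p := by
  obtain ⟨K, hK⟩ := eventually_atTop.1 (ht C)
  refine ⟨K, fun p hp =>
    ⟨fun k hk => hK k hk p hp, finsum_eq_sum_of_support_subset _ fun k hk => ?_⟩⟩
  by_contra h
  exact hk (hK k (by simpa using h) p hp)

theorem finsum_sub_succ (hc : EventuallyVanishesAbove act c) (q : P) :
    ∑ᶠ k, (c k q - c (k + 1) q) = c 0 q := by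
  obtain ⟨K, hK⟩ := eventually_atTop.1 (hc (act q - 1))
  have hvan : ∀ k, K ≤ k → c k q = 0 := fun k hk => hK k hk q (by linarith)
  rw [finsum_eq_sum_of_support_subset (s := Finset.range K) _ fun k hk => ?_,
    Finset.sum_range_sub', hvan K le_rfl, sub_zero]
  by_contra h
  rw [Finset.mem_coe, Finset.mem_range, not_lt] at h
  simp [hvan k h, hvan (k + 1) (by omega)] at hk

theorem isFloerChain_finsum (h0 : EventuallyVanishesAbove act t)
    (ht : ∀ k, IsFloerChain act (t k)) : IsFloerChain act fun p => ∑ᶠ k, t k p := by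
  intro C
  obtain ⟨K, hK⟩ := h0.exists_finsum_eq_sum_range C
  refine ((Finset.range K).finite_toSet.biUnion fun k _ => ht k C).subset
    fun p ⟨hp, hC⟩ => ?_
  replace hp : ∑ k ∈ Finset.range K, t k p ≠ 0 := (hK p hC).2 ▸ hp
  obtain ⟨k, hk, hne⟩ := Finset.exists_ne_zero_of_sum_ne_zero hp
  exact mem_biUnion hk ⟨hne, hC⟩

end EventuallyVanishesAbove

def groupRingAct (m : MonoidAlgebra R Γ) (c : P → R) : P → R :=
  m.coeff.sum fun g r => r • fun p => c (g⁻¹ • p)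

theorem groupRingAct_apply (m : MonoidAlgebra R Γ) (c : P → R) (p : P) :
    groupRingAct m c p = m.coeff.sum fun g r => r * c (g⁻¹ • p) := by
  simp [groupRingAct, Finsupp.sum, Finset.sum_apply]

theorem exists_of_groupRingAct_ne_zero {m : MonoidAlgebra R Γ} {c : P → R} {p : P}
    (h : groupRingAct m c p ≠ 0) : ∃ g ∈ m.coeff.support, c (g⁻¹ • p) ≠ 0 := by
  rw [groupRingAct_apply] at h
  obtain ⟨g, hg, hne⟩ := Finset.exists_ne_zero_of_sum_ne_zero h
  exact ⟨g, hg, right_ne_zero_of_mul hne⟩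

def homogeneousPart (deg : Γ → ℝ) (m : MonoidAlgebra R Γ) (t : ℝ) : MonoidAlgebra R Γ :=
  .ofCoeff (m.coeff.filter fun g => deg g = t)

def leadingTerm (act : P → ℝ) (c : P → R) : P → R :=
  fun p => if act p = topLevel act c then c p else 0

theorem IsFloerChain.finite_support_leadingTerm {act : P → ℝ} {c : P → R}
    (hc : IsFloerChain act c) : (support (leadingTerm act c)).Finite :=
  (hc (topLevel act c - 1)).subset fun p hp => by
    by_cases h : act p = topLevel act c
    · simp only [leadingTerm, h, if_true, mem_support] at hp
      exact ⟨hp, by linarith⟩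
    · simp [leadingTerm, h] at hp

variable (Γ) in
/-- Reads `y` on the orbit `s` through the chosen representative `s.out`, as an element of `R[Γ]`
(junk value `0` when `y` does not have finite support on that orbit). -/
def orbitEncoding (y : P → R) (s : MulAction.orbitRel.Quotient Γ P) : MonoidAlgebra R Γ :=
  open Classical in
  if h : (support fun g : Γ => y (g • s.out)).Finite then
    .ofCoeff (Finsupp.ofSupportFinite _ h) else 0

theorem coeff_orbitEncoding {y : P → R} {s : MulAction.orbitRel.Quotient Γ P}
    (h : (support fun g : Γ => y (g • s.out)).Finite) (g : Γ) :
    (orbitEncoding Γ y s).coeff g = y (g • s.out) := by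
  rw [orbitEncoding, dif_pos h]
  rfl

theorem exists_smul_out_eq (p : P) :
    ∃ g : Γ, g • (⟦p⟧ : MulAction.orbitRel.Quotient Γ P).out = p := by
  obtain ⟨g, hg⟩ := Quotient.exact (Quotient.out_eq (⟦p⟧ : MulAction.orbitRel.Quotient Γ P))
  exact ⟨g⁻¹, by rw [← hg, inv_smul_smul]⟩

theorem eq_sum_groupRingAct_of_orbitEncoding_eq {J : Type*} [Fintype J] {y : P → R}
    {z : J → P → R}
    (hz : ∀ j (s : MulAction.orbitRel.Quotient Γ P),
      (support fun g : Γ => z j (g • s.out)).Finite)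
    (hy : ∀ s : MulAction.orbitRel.Quotient Γ P, (support fun g : Γ => y (g • s.out)).Finite)
    {m : J → MonoidAlgebra R Γ} (h : ∑ j, m j • orbitEncoding Γ (z j) = orbitEncoding Γ y) :
    y = ∑ j, groupRingAct (m j) (z j) := by
  funext p
  obtain ⟨g₀, hg₀⟩ := exists_smul_out_eq (Γ := Γ) p
  have hcoeff := congrArg (fun e => (e ⟦p⟧).coeff g₀) h
  simp only [Finset.sum_apply, Pi.smul_apply, smul_eq_mul, MonoidAlgebra.coeff_sum,
    Finsupp.coe_finsetSum, MonoidAlgebra.coeff_mul_apply_left, coeff_orbitEncoding (hz _ _),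
    coeff_orbitEncoding (hy _), mul_smul, hg₀] at hcoeff
  simp only [← hcoeff, Finset.sum_apply, groupRingAct_apply]

def levelGaps {J : Type*} (act : P → ℝ) (C : J → P → R) : Set ℝ :=
  {δ | 0 < δ ∧ ∃ j q, C j q ≠ 0 ∧ topLevel act (C j) - act q = δ}

theorem finite_levelGaps_inter_Iic {J : Type*} [Finite J] {act : P → ℝ} {C : J → P → R}
    (hC : ∀ j, IsFloerChain act (C j)) (B : ℝ) : (levelGaps act C ∩ Iic B).Finite := by
  refine (finite_iUnion fun j => ((hC j (topLevel act (C j) - B - 1)).image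
    fun q => topLevel act (C j) - act q)).subset ?_
  rintro _ ⟨⟨-, j, q, hq, rfl⟩, hB⟩
  exact mem_iUnion.2 ⟨j, q, ⟨hq, by simp only [mem_Iic] at hB; linarith⟩, rfl⟩

theorem sub_mem_closure_levelGaps {J : Type*} {act : P → ℝ} {C : J → P → R}
    (hC : ∀ j, IsFloerChain act (C j)) {j : J} {q : P} (hq : C j q ≠ 0) :
    topLevel act (C j) - act q ∈ AddSubmonoid.closure (levelGaps act C) := by
  rcases ((hC j).le_topLevel hq).eq_or_lt with h | h
  · rw [h, sub_self]
    exact zero_mem _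
  · exact AddSubmonoid.subset_closure ⟨sub_pos.2 h, j, q, hq, rfl⟩

namespace FloerComplex

def IsBoundary (𝔠 : FloerComplex R Γ P) (c : P → R) : Prop :=
  ∃ y, IsFloerChain 𝔠.act y ∧ floerBdry 𝔠.bnd y = c

theorem act_inv_smul (𝔠 : FloerComplex R Γ P) (g : Γ) (p : P) :
    𝔠.act (g⁻¹ • p) = 𝔠.act p + 𝔠.per g := by
  have := 𝔠.act_smul g (g⁻¹ • p)
  rw [smul_inv_smul] at this
  linarith

theorem smul_left_injective (𝔠 : FloerComplex R Γ P) (p : P) : Injective fun g : Γ => g • p :=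
  fun g g' h => by
    have := 𝔠.free (g'⁻¹ * g) p (by simp only [mul_smul, h, inv_smul_smul])
    rwa [inv_mul_eq_one, eq_comm] at this

theorem finite_support_orbit (𝔠 : FloerComplex R Γ P) {y : P → R} (hy : (support y).Finite)
    (s : MulAction.orbitRel.Quotient Γ P) : (support fun g : Γ => y (g • s.out)).Finite :=
  hy.preimage (𝔠.smul_left_injective _).injOn

variable {𝔠 : FloerComplex R Γ P}

theorem per_eq_of_mem_support_homogeneousPart {m : MonoidAlgebra R Γ} {t : ℝ} {g : Γ}
    (hg : g ∈ (homogeneousPart 𝔠.per m t).coeff.support) : 𝔠.per g = t :=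
  (Finset.mem_filter.1 hg).2

theorem IsBoundary.isFloerChain {c : P → R} (hc : 𝔠.IsBoundary c) : IsFloerChain 𝔠.act c := by
  obtain ⟨y, hy, rfl⟩ := hc
  exact 𝔠.bdry_isChain y hy

theorem isFloerChain_comp_inv_smul {c : P → R} (hc : IsFloerChain 𝔠.act c) (g : Γ) :
    IsFloerChain 𝔠.act fun p => c (g⁻¹ • p) := fun C =>
  ((hc (C + 𝔠.per g)).image (g • ·)).subset fun p ⟨hp, hC⟩ =>
    ⟨g⁻¹ • p, ⟨hp, by rw [𝔠.act_inv_smul]; linarith⟩, smul_inv_smul g p⟩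

theorem isFloerChain_groupRingAct {c : P → R} (hc : IsFloerChain 𝔠.act c)
    (m : MonoidAlgebra R Γ) : IsFloerChain 𝔠.act (groupRingAct m c) :=
  IsFloerChain.sum fun g _ => (isFloerChain_comp_inv_smul hc g).smul _

theorem hasFiniteSupport_mul_bnd {c : P → R} (hc : IsFloerChain 𝔠.act c) (q : P) :
    HasFiniteSupport fun p => c p * 𝔠.bnd p q :=
  (hc (𝔠.act q)).subset fun _ hp =>
    ⟨left_ne_zero_of_mul hp, 𝔠.bnd_vanish _ _ (right_ne_zero_of_mul hp)⟩

theorem bdry_sub {x y : P → R} (hx : IsFloerChain 𝔠.act x) (hy : IsFloerChain 𝔠.act y) :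
    floerBdry 𝔠.bnd (x - y) = floerBdry 𝔠.bnd x - floerBdry 𝔠.bnd y := by
  funext q
  simp only [floerBdry, Pi.sub_apply, sub_mul]
  exact finsum_sub_distrib (hasFiniteSupport_mul_bnd hx q) (hasFiniteSupport_mul_bnd hy q)

theorem bdry_sum {ι : Type*} (s : Finset ι) {f : ι → P → R}
    (hf : ∀ i ∈ s, IsFloerChain 𝔠.act (f i)) :
    floerBdry 𝔠.bnd (∑ i ∈ s, f i) = ∑ i ∈ s, floerBdry 𝔠.bnd (f i) := by
  funext q
  simp only [floerBdry, Finset.sum_apply, Finset.sum_mul]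
  exact finsum_sum_comm s _ fun i hi => hasFiniteSupport_mul_bnd (hf i hi) q

theorem bdry_smul (r : R) {c : P → R} (hc : IsFloerChain 𝔠.act c) :
    floerBdry 𝔠.bnd (r • c) = r • floerBdry 𝔠.bnd c := by
  funext q
  simp only [floerBdry, Pi.smul_apply, smul_eq_mul, mul_assoc]
  exact (mul_finsum' _ r (hasFiniteSupport_mul_bnd hc q)).symm

theorem bdry_comp_inv_smul (c : P → R) (g : Γ) :
    floerBdry 𝔠.bnd (fun p => c (g⁻¹ • p)) = fun q => floerBdry 𝔠.bnd c (g⁻¹ • q) := by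
  funext q
  rw [floerBdry, floerBdry, ← finsum_comp_equiv (MulAction.toPerm g)]
  refine finsum_congr fun p => ?_
  simp [← 𝔠.bnd_equivariant g⁻¹ (g • p) q]

theorem bdry_groupRingAct {c : P → R} (hc : IsFloerChain 𝔠.act c) (m : MonoidAlgebra R Γ) :
    floerBdry 𝔠.bnd (groupRingAct m c) = groupRingAct m (floerBdry 𝔠.bnd c) := by
  rw [groupRingAct, Finsupp.sum,
    bdry_sum _ fun g _ => (isFloerChain_comp_inv_smul hc g).smul _]
  refine Finset.sum_congr rfl fun g _ => ?_
  rw [bdry_smul _ (isFloerChain_comp_inv_smul hc g), bdry_comp_inv_smul]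

theorem bdry_finsum {t : ℕ → P → R} (ht : ∀ k, IsFloerChain 𝔠.act (t k))
    (h0 : EventuallyVanishesAbove 𝔠.act t) (q : P) :
    floerBdry 𝔠.bnd (fun p => ∑ᶠ k, t k p) q = ∑ᶠ k, floerBdry 𝔠.bnd (t k) q := by
  obtain ⟨K, hK⟩ := h0.exists_finsum_eq_sum_range (𝔠.act q)
  have hterm : ∀ p, (∑ᶠ k, t k p) * 𝔠.bnd p q = ∑ k ∈ Finset.range K, t k p * 𝔠.bnd p q := by
    intro p
    by_cases hb : 𝔠.bnd p q = 0
    · simp [hb]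
    · rw [(hK p (𝔠.bnd_vanish p q hb)).2, Finset.sum_mul]
  have hzero : ∀ k, K ≤ k → floerBdry 𝔠.bnd (t k) q = 0 := fun k hk =>
    finsum_eq_zero_of_forall_eq_zero fun p => by
      by_cases hb : 𝔠.bnd p q = 0
      · simp [hb]
      · rw [(hK p (𝔠.bnd_vanish p q hb)).1 k hk, zero_mul]
  rw [floerBdry, finsum_congr hterm,
    finsum_sum_comm _ _ fun k _ => hasFiniteSupport_mul_bnd (ht k) q,
    finsum_eq_sum_of_support_subset (s := Finset.range K) _ fun k hk => ?_]
  · rfl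
  · by_contra h
    exact hk (hzero k (by simpa using h))

theorem exists_bounding_chain_of_telescoping {c t : ℕ → P → R} {M : ℝ}
    (hc : EventuallyVanishesAbove 𝔠.act c) (ht : ∀ k, IsFloerChain 𝔠.act (t k))
    (hbdry : ∀ k, floerBdry 𝔠.bnd (t k) = c k - c (k + 1))
    (htM : ∀ k, SupportRel 𝔠.act (fun a b => a ≤ b + M) (t k) (c k))
    (hdecr : ∀ k, SupportRel 𝔠.act (· < ·) (c (k + 1)) (c k)) :
    ∃ h, IsFloerChain 𝔠.act h ∧ floerBdry 𝔠.bnd h = c 0 ∧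
      SupportRel 𝔠.act (fun a b => a ≤ b + M) h (c 0) := by
  have htV := hc.of_supportRel_add htM
  refine ⟨fun p => ∑ᶠ k, t k p, htV.isFloerChain_finsum ht, funext fun q => ?_,
    SupportRel.finsum fun k => (htM k).trans
      (SupportRel.of_succ le_refl (fun _ _ _ => le_trans)
        (fun k => (hdecr k).mono fun _ _ => le_of_lt) k)
      fun _ _ _ h1 h2 => by linarith⟩
  simp_rw [bdry_finsum ht htV q, hbdry, Pi.sub_apply]
  exact hc.finsum_sub_succ q

theorem IsBoundary.sub_bdry {c t : P → R} (hc : 𝔠.IsBoundary c) (ht : IsFloerChain 𝔠.act t) :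
    𝔠.IsBoundary (c - floerBdry 𝔠.bnd t) := by
  obtain ⟨y, hy, rfl⟩ := hc
  exact ⟨y - t, hy.sub ht, bdry_sub hy ht⟩

theorem groupRingAct_leadingTerm_apply (m : MonoidAlgebra R Γ) (C : P → R) (p : P) :
    groupRingAct m (leadingTerm 𝔠.act C) p =
      groupRingAct (homogeneousPart 𝔠.per m (topLevel 𝔠.act C - 𝔠.act p)) C p := by
  simp only [groupRingAct_apply, homogeneousPart]
  rw [Finsupp.sum_of_support_subset (m.coeff.filter _) (Finset.filter_subset _ _)
    (fun g r => r * C (g⁻¹ • p)) fun _ _ => zero_mul _]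
  refine Finset.sum_congr rfl fun g _ => ?_
  have hlevel : 𝔠.act (g⁻¹ • p) = topLevel 𝔠.act C ↔
      𝔠.per g = topLevel 𝔠.act C - 𝔠.act p := by
    rw [𝔠.act_inv_smul]
    constructor <;> intro h <;> linarith
  by_cases h : 𝔠.per g = topLevel 𝔠.act C - 𝔠.act p
  · simp [leadingTerm, h, hlevel.2 h]
  · simp [leadingTerm, h, mt hlevel.1 h]

theorem groupRingAct_homogeneousPart_apply_eq_zero {C : P → R} (hC : IsFloerChain 𝔠.act C)
    (m : MonoidAlgebra R Γ) {t : ℝ} {p : P} (hp : t < 𝔠.act p) :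
    groupRingAct (homogeneousPart 𝔠.per m (topLevel 𝔠.act C - t)) C p = 0 := by
  by_contra h
  obtain ⟨g, hg, hC0⟩ := exists_of_groupRingAct_ne_zero h
  have := hC.le_topLevel hC0
  rw [𝔠.act_inv_smul, per_eq_of_mem_support_homogeneousPart hg] at this
  linarith

def SpansLeadingTerms {J : Type*} (𝔠 : FloerComplex R Γ P) (Y : J → P → R) : Prop :=
  ∀ c, 𝔠.IsBoundary c → orbitEncoding Γ (leadingTerm 𝔠.act c) ∈
    Submodule.span (MonoidAlgebra R Γ)
      (range fun j => orbitEncoding Γ (leadingTerm 𝔠.act (floerBdry 𝔠.bnd (Y j))))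

theorem exists_finset_spansLeadingTerms [Group.FG Γ] [IsNoetherianRing R]
    (𝔠 : FloerComplex R Γ P) :
    ∃ Ys : Finset (P → R), (∀ y ∈ Ys, IsFloerChain 𝔠.act y) ∧
      𝔠.SpansLeadingTerms fun y : Ys => (y : P → R) := by
  classical
  have := 𝔠.finiteOrbits
  have : Monoid.FG Γ := Group.fg_iff_monoid_fg.1 inferInstance
  have : IsNoetherianRing (MonoidAlgebra R Γ) := Algebra.FiniteType.isNoetherianRing R _
  let enc : (P → R) → MulAction.orbitRel.Quotient Γ P → MonoidAlgebra R Γ :=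
    fun y => orbitEncoding Γ (leadingTerm 𝔠.act (floerBdry 𝔠.bnd y))
  obtain ⟨S, hS, hspan⟩ := (Submodule.fg_span_iff_fg_span_finset_subset
    (enc '' {y | IsFloerChain 𝔠.act y})).1 (IsNoetherian.noetherian (R := MonoidAlgebra R Γ) _)
  obtain ⟨Ys, hYs, rfl⟩ := Finset.subset_set_image_iff.1 hS
  refine ⟨Ys, hYs, fun c ⟨y, hy, hyc⟩ => ?_⟩
  have hmem : enc y ∈ Submodule.span (MonoidAlgebra R Γ) ↑(Ys.image enc) :=
    hspan ▸ Submodule.subset_span ⟨y, hy, rfl⟩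
  rw [← hyc]
  refine Submodule.span_mono (fun v hv => ?_) hmem
  obtain ⟨y', hy', rfl⟩ := Finset.mem_image.1 hv
  exact ⟨⟨y', hy'⟩, rfl⟩

section Reduction

variable {J : Type*} [Fintype J]

theorem exists_homogeneous_decomposition {C : J → P → R} (hC : ∀ j, IsFloerChain 𝔠.act (C j))
    {c : P → R} (hc : IsFloerChain 𝔠.act c)
    (hspan : orbitEncoding Γ (leadingTerm 𝔠.act c) ∈ Submodule.span (MonoidAlgebra R Γ)
      (range fun j => orbitEncoding Γ (leadingTerm 𝔠.act (C j)))) :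
    ∃ m : J → MonoidAlgebra R Γ,
      (∀ j, ∀ g ∈ (m j).coeff.support, 𝔠.per g = topLevel 𝔠.act (C j) - topLevel 𝔠.act c) ∧
      ∀ p, topLevel 𝔠.act c ≤ 𝔠.act p → c p = (∑ j, groupRingAct (m j) (C j)) p := by
  obtain ⟨m, hm⟩ := (Submodule.mem_span_range_iff_exists_fun _).1 hspan
  have hlead := eq_sum_groupRingAct_of_orbitEncoding_eq
    (fun j => 𝔠.finite_support_orbit (hC j).finite_support_leadingTerm)
    (𝔠.finite_support_orbit hc.finite_support_leadingTerm) hm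
  refine ⟨fun j => homogeneousPart 𝔠.per (m j) (topLevel 𝔠.act (C j) - topLevel 𝔠.act c),
    fun j g => per_eq_of_mem_support_homogeneousPart, fun p hp => ?_⟩
  rw [Finset.sum_apply]
  rcases hp.eq_or_lt with heq | hlt
  · simpa only [leadingTerm, ← heq, if_true, Finset.sum_apply, groupRingAct_leadingTerm_apply]
      using congrFun hlead p
  · rw [Finset.sum_eq_zero fun j _ => groupRingAct_homogeneousPart_apply_eq_zero (hC j) _ hlt]
    by_contra h
    exact absurd (hc.le_topLevel h) (not_le.2 hlt)

theorem exists_act_eq_of_sum_groupRingAct_ne_zero {m : J → MonoidAlgebra R Γ} {ℓ : ℝ}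
    {lvl : J → ℝ} (hm : ∀ j, ∀ g ∈ (m j).coeff.support, 𝔠.per g = lvl j - ℓ) {Z : J → P → R}
    {p : P} (hp : (∑ j, groupRingAct (m j) (Z j)) p ≠ 0) :
    ∃ j q, Z j q ≠ 0 ∧ 𝔠.act p = ℓ - (lvl j - 𝔠.act q) := by
  rw [Finset.sum_apply] at hp
  obtain ⟨j, -, hj⟩ := Finset.exists_ne_zero_of_sum_ne_zero hp
  obtain ⟨g, hg, hq⟩ := exists_of_groupRingAct_ne_zero hj
  refine ⟨j, g⁻¹ • p, hq, ?_⟩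
  rw [𝔠.act_inv_smul, hm j g hg]
  ring

variable {Y : J → P → R} {M : ℝ}

theorem exists_reduction_step (hY : ∀ j, IsFloerChain 𝔠.act (Y j))
    (hspan : 𝔠.SpansLeadingTerms Y)
    (hM : ∀ j, topLevel 𝔠.act (Y j) ≤ topLevel 𝔠.act (floerBdry 𝔠.bnd (Y j)) + M)
    {c : P → R} (hc : 𝔠.IsBoundary c) :
    ∃ t, IsFloerChain 𝔠.act t ∧ SupportRel 𝔠.act (fun a b => a ≤ b + M) t c ∧
      SupportRel 𝔠.act (· < ·) (c - floerBdry 𝔠.bnd t) c ∧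
      SupportRel 𝔠.act
        (fun a b => b - a ∈ AddSubmonoid.closure (levelGaps 𝔠.act fun j => floerBdry 𝔠.bnd (Y j)))
        (c - floerBdry 𝔠.bnd t) c := by
  rcases eq_or_ne c 0 with rfl | h0
  · refine ⟨0, IsFloerChain.zero, ?_, ?_, ?_⟩ <;> intro p hp <;> simp [floerBdry] at hp
  set C := fun j => floerBdry 𝔠.bnd (Y j)
  have hC : ∀ j, IsFloerChain 𝔠.act (C j) := fun j => 𝔠.bdry_isChain _ (hY j)
  obtain ⟨m, hm, hdec⟩ := exists_homogeneous_decomposition hC hc.isFloerChain (hspan c hc)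
  obtain ⟨ptop, hptop, hptop_eq⟩ := hc.isFloerChain.exists_act_eq_topLevel h0
  have hbdry : floerBdry 𝔠.bnd (∑ j, groupRingAct (m j) (Y j)) =
      ∑ j, groupRingAct (m j) (C j) := by
    rw [bdry_sum _ fun j _ => isFloerChain_groupRingAct (hY j) _]
    exact Finset.sum_congr rfl fun j _ => bdry_groupRingAct (hY j) _
  refine ⟨∑ j, groupRingAct (m j) (Y j),
    IsFloerChain.sum fun j _ => isFloerChain_groupRingAct (hY j) _,
    fun p hp => ?_, hbdry ▸ fun p hp => ?_, hbdry ▸ fun p hp => ?_⟩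
  · obtain ⟨j, q, hq, hpq⟩ := exists_act_eq_of_sum_groupRingAct_ne_zero hm hp
    have := (hY j).le_topLevel hq
    have := hM j
    exact ⟨ptop, hptop, by linarith⟩
  · refine ⟨ptop, hptop, hptop_eq ▸ lt_of_not_ge fun hge => hp ?_⟩
    rw [Pi.sub_apply, hdec p hge, sub_self]
  · by_cases hcp : c p = 0
    · have hu : (∑ j, groupRingAct (m j) (C j)) p ≠ 0 := by simpa [hcp] using hp
      obtain ⟨j, q, hq, hpq⟩ := exists_act_eq_of_sum_groupRingAct_ne_zero hm hu
      refine ⟨ptop, hptop, show _ - _ ∈ _ from ?_⟩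
      rw [hptop_eq, hpq, sub_sub_cancel]
      exact sub_mem_closure_levelGaps hC hq
    · exact ⟨p, hcp, show _ - _ ∈ _ by rw [sub_self]; exact zero_mem _⟩

theorem exists_bounding_chain (hY : ∀ j, IsFloerChain 𝔠.act (Y j))
    (hspan : 𝔠.SpansLeadingTerms Y)
    (hM : ∀ j, topLevel 𝔠.act (Y j) ≤ topLevel 𝔠.act (floerBdry 𝔠.bnd (Y j)) + M)
    {c : P → R} (hc : 𝔠.IsBoundary c) :
    ∃ h, IsFloerChain 𝔠.act h ∧ floerBdry 𝔠.bnd h = c ∧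
      SupportRel 𝔠.act (fun a b => a ≤ b + M) h c := by
  choose T hT hTM hTlt hTgap using
    fun x : {x // 𝔠.IsBoundary x} => exists_reduction_step hY hspan hM x.2
  let step : {x // 𝔠.IsBoundary x} → {x // 𝔠.IsBoundary x} :=
    fun x => ⟨x - floerBdry 𝔠.bnd (T x), x.2.sub_bdry (hT x)⟩
  let x : ℕ → {x // 𝔠.IsBoundary x} := fun k => step^[k] ⟨c, hc⟩
  have hx : ∀ k, (x (k + 1) : P → R) = x k - floerBdry 𝔠.bnd (T (x k)) := fun k =>
    congrArg Subtype.val (iterate_succ_apply' step k _)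
  set S := AddSubmonoid.closure (levelGaps 𝔠.act fun j => floerBdry 𝔠.bnd (Y j))
  have hreach : ∀ k, SupportRel 𝔠.act (fun a b => b - a ∈ S) (x k) c :=
    SupportRel.of_succ (c := fun k => (x k : P → R)) (fun _ => by simp [zero_mem])
      (fun _ _ _ hab hbc => by simpa using add_mem hbc hab) fun k => hx k ▸ hTgap (x k)
  have hdecr : ∀ k, SupportRel 𝔠.act (· < ·) (x (k + 1) : P → R) (x k) :=
    fun k => hx k ▸ hTlt (x k)
  have hcV : EventuallyVanishesAbove 𝔠.act fun k => (x k : P → R) :=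
    .of_supportRel_lt
      (hc.isFloerChain.finite_sub_mem_inter_Ici
        (fun _ => AddSubmonoid.nonneg_of_mem_closure fun _ h => h.1)
        (AddSubmonoid.finite_closure_inter_Iic (fun _ h => h.1)
          (finite_levelGaps_inter_Iic fun j => 𝔠.bdry_isChain _ (hY j))))
      hreach hdecr
  exact exists_bounding_chain_of_telescoping hcV (fun k => hT _)
    (fun k => by rw [hx, sub_sub_cancel]) (fun k => hTM (x k)) hdecr

end Reduction

end FloerComplex

/-- over a Noetherian ring there is a constant `M` such that any
boundary `c` bounds a chain `h` with `ℓ(h) ≤ ℓ(c) + M`. -/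
theorem bounding_chain_estimate [Group.FG Γ] [IsNoetherianRing R]
    (𝔠 : FloerComplex R Γ P) :
    ∃ M : ℝ, ∀ c : P → R, IsFloerChain 𝔠.act c →
      (∃ h₀ : P → R, IsFloerChain 𝔠.act h₀ ∧ floerBdry 𝔠.bnd h₀ = c) →
      ∃ h : P → R, IsFloerChain 𝔠.act h ∧ floerBdry 𝔠.bnd h = c ∧
        floerLevel 𝔠.act h ≤ floerLevel 𝔠.act c + (M : EReal) := by
  obtain ⟨Ys, hYs, hspan⟩ := 𝔠.exists_finset_spansLeadingTerms
  obtain ⟨M, hM⟩ := (finite_range fun y : Ys =>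
    topLevel 𝔠.act (y : P → R) - topLevel 𝔠.act (floerBdry 𝔠.bnd y)).bddAbove
  refine ⟨M, fun c _ hc => ?_⟩
  obtain ⟨h, hh, hbdry, hlevel⟩ := FloerComplex.exists_bounding_chain
    (fun y : Ys => hYs y y.2) hspan (fun y => by linarith [hM ⟨y, rfl⟩]) hc
  exact ⟨h, hh, hbdry, floerLevel_le_add hlevel⟩
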